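/- (Lemma 2.2, asymptotic estimates.) Let (x_n, y_n)_{n≥0} be a sequence of positive pairs following the explicit SG recursion with x0 > y0 > 0. Then there exists a constant C > 0 such that for all n ≥ 0: C⁻¹(2/3)^n ≤ x_n ≤ C(2/3)^n and C⁻¹(1/2)^n ≤ y_n ≤ C(1/2)^n. -/
import Mathlib


noncomputable section

/-- `N(x, y) = √(4x² + 6xy + 6y²)`. -/
def NSG (x y : ℝ) : ℝ := Real.sqrt (4 * x ^ 2 + 6 * x * y + 6 * y ^ 2)

/-- A sequence of positive pairs following the explicit SG recursion. -/
def FollowsSG (X Y : ℕ → ℝ) : Prop :=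
  (∀ n, 0 < X n ∧ 0 < Y n) ∧
  ∀ n, X (n + 1) = (14 * X n + 3 * Y n - 2 * NSG (X n) (Y n)) / 15 ∧
       Y (n + 1) = (-2 * X n + Y n + NSG (X n) (Y n)) / 5

lemma NSG_sq {x y : ℝ} (hx : 0 < x) (hy : 0 < y) :
    NSG x y ^ 2 = 4 * x ^ 2 + 6 * x * y + 6 * y ^ 2 :=
  Real.sq_sqrt (by positivity)

lemma NSG_nonneg (x y : ℝ) : 0 ≤ NSG x y := Real.sqrt_nonneg _

lemma NSG_lb {x y : ℝ} (hx : 0 < x) (hy : 0 < y) : 2 * x + 3 / 2 * y ≤ NSG x y := by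
  have h : (2 * x + 3 / 2 * y) ^ 2 ≤ 4 * x ^ 2 + 6 * x * y + 6 * y ^ 2 := by nlinarith [sq_nonneg y]
  calc 2 * x + 3 / 2 * y = Real.sqrt ((2 * x + 3 / 2 * y) ^ 2) := (Real.sqrt_sq (by positivity)).symm
    _ ≤ NSG x y := Real.sqrt_le_sqrt h

lemma NSG_ub {x y : ℝ} (hx : 0 < x) (hy : 0 < y) :
    NSG x y * x ≤ 2 * x ^ 2 + 3 / 2 * (x * y) + y ^ 2 := by
  have hb : (0:ℝ) ≤ 2 * x ^ 2 + 3 / 2 * (x * y) + y ^ 2 := by positivity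
  have h2 : (NSG x y * x) ^ 2 ≤ (2 * x ^ 2 + 3 / 2 * (x * y) + y ^ 2) ^ 2 := by
    rw [mul_pow, NSG_sq hx hy]
    nlinarith [sq_nonneg (x*y), mul_pos hx hy, pow_pos hy 4, mul_pos (mul_pos hx hy) (mul_pos hy hy)]
  exact le_of_pow_le_pow_left₀ two_ne_zero hb h2

lemma NSG_lt {x y : ℝ} (hx : 0 < x) (hy : 0 < y) (hyx : y < x) : NSG x y < 4 * x := by
  rw [NSG, Real.sqrt_lt' (by positivity)]
  nlinarith

lemma exp_low {a : ℝ} (h0 : 0 ≤ a) (h1 : a ≤ 1/2) : Real.exp (-(2*a)) ≤ 1 - a := by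
  have h2 : 1 + 2*a ≤ Real.exp (2*a) := by have := Real.add_one_le_exp (2*a); linarith
  have h3 : (1:ℝ) ≤ (1-a) * Real.exp (2*a) := by nlinarith [Real.exp_pos (2*a)]
  have : Real.exp (-(2*a)) = 1 / Real.exp (2*a) := by rw [Real.exp_neg, one_div]
  rw [this, div_le_iff₀ (Real.exp_pos _)]
  linarith

lemma ratio_step {x y : ℝ} (hx : 0 < x) (hy : 0 < y) (hyx : y < x) :
    8 * x ^ 2 * ((-2 * x + y + NSG x y) / 5) ≤
      (7 * x + y) * y * ((14 * x + 3 * y - 2 * NSG x y) / 15) := by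
  have hN0 : 0 ≤ NSG x y := NSG_nonneg x y
  have hN2 : NSG x y ^ 2 = 4 * x ^ 2 + 6 * x * y + 6 * y ^ 2 := NSG_sq hx hy
  set N := NSG x y with hN
  have hL : (0:ℝ) < 24*x^2 + 14*x*y + 2*y^2 := by positivity
  have hR : (0:ℝ) < 48*x^3 + 74*x^2*y + 35*x*y^2 + 3*y^3 := by positivity
  have key : N * (24*x^2 + 14*x*y + 2*y^2) ≤ 48*x^3 + 74*x^2*y + 35*x*y^2 + 3*y^3 := by
    have e : (48*x^3 + 74*x^2*y + 35*x*y^2 + 3*y^3 - N * (24*x^2 + 14*x*y + 2*y^2)) *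
        (48*x^3 + 74*x^2*y + 35*x*y^2 + 3*y^3 + N * (24*x^2 + 14*x*y + 2*y^2)) =
        y * (x - y) * (960*x^4 + 1140*x^3*y + 600*x^2*y^2 + 165*x*y^3 + 15*y^4) := by
      linear_combination (-(24*x^2 + 14*x*y + 2*y^2)^2) * hN2
    have h1 : 0 ≤ (48*x^3 + 74*x^2*y + 35*x*y^2 + 3*y^3 - N * (24*x^2 + 14*x*y + 2*y^2)) *
        (48*x^3 + 74*x^2*y + 35*x*y^2 + 3*y^3 + N * (24*x^2 + 14*x*y + 2*y^2)) := by
      rw [e]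
      have : (0:ℝ) ≤ x - y := by linarith
      positivity
    have h2 : (0:ℝ) < 48*x^3 + 74*x^2*y + 35*x*y^2 + 3*y^3 + N * (24*x^2 + 14*x*y + 2*y^2) := by
      have := mul_nonneg hN0 hL.le
      linarith
    have h3 := (mul_nonneg_iff_of_pos_right h2).1 h1
    linarith
  linarith [key]

-- order preserved
lemma step_lt {x y : ℝ} (hx : 0 < x) (hy : 0 < y) (hyx : y < x) :
    (-2 * x + y + NSG x y) / 5 < (14 * x + 3 * y - 2 * NSG x y) / 15 := by
  have := NSG_lt hx hy hyx
  linarith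

lemma step_ypos {x y : ℝ} (hx : 0 < x) (hy : 0 < y) :
    y / 2 ≤ (-2 * x + y + NSG x y) / 5 := by
  have := NSG_lb hx hy
  linarith

lemma step_xub {x y : ℝ} (hx : 0 < x) (hy : 0 < y) :
    (14 * x + 3 * y - 2 * NSG x y) / 15 ≤ 2 / 3 * x := by
  have := NSG_lb hx hy
  linarith

lemma step_yub {x y c : ℝ} (hx : 0 < x) (hy : 0 < y) (hc : y ≤ c * x) :
    (-2 * x + y + NSG x y) / 5 ≤ (1 + 2/5 * c) * (y / 2) := by
  have h1 := NSG_ub hx hy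
  -- x * (−2x + y + N) ≤ 5/2 x y + y² ≤ (5/2 + c) x y
  have h2 : y ^ 2 ≤ c * x * y := by nlinarith
  have h3 : x * ((-2 * x + y + NSG x y) / 5) ≤ x * ((1 + 2/5 * c) * (y / 2)) := by nlinarith
  exact le_of_mul_le_mul_left h3 hx

lemma step_xlb {x y c : ℝ} (hx : 0 < x) (hy : 0 < y) (hc : y ≤ c * x) (hc0 : 0 ≤ c) :
    2 / 3 * ((1 - c ^ 2 / 5) * x) ≤ (14 * x + 3 * y - 2 * NSG x y) / 15 := by
  have h1 := NSG_ub hx hy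
  have h2 : y ^ 2 ≤ c ^ 2 * x ^ 2 := by nlinarith
  have h3 : x * (2 / 3 * ((1 - c ^ 2 / 5) * x)) ≤ x * ((14 * x + 3 * y - 2 * NSG x y) / 15) := by
    nlinarith
  exact le_of_mul_le_mul_left h3 hx

lemma step_ratio {x y c : ℝ} (hx : 0 < x) (hy : 0 < y) (hyx : y < x) (hc : y ≤ c * x)
    (hc0 : 0 ≤ c) :
    (-2 * x + y + NSG x y) / 5 ≤ (7 + c) / 8 * c * ((14 * x + 3 * y - 2 * NSG x y) / 15) := by
  have h0 := ratio_step hx hy hyx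
  have hx'pos : 0 < (14 * x + 3 * y - 2 * NSG x y) / 15 := by
    have := step_lt hx hy hyx
    have := step_ypos hx hy
    linarith
  have h1 : (7 * x + y) * y ≤ (7 + c) * c * x ^ 2 := by nlinarith
  have h2 : 8 * x ^ 2 * ((-2 * x + y + NSG x y) / 5) ≤
      (7 + c) * c * x ^ 2 * ((14 * x + 3 * y - 2 * NSG x y) / 15) := by
    calc 8 * x ^ 2 * ((-2 * x + y + NSG x y) / 5)
        ≤ (7 * x + y) * y * ((14 * x + 3 * y - 2 * NSG x y) / 15) := h0
      _ ≤ (7 + c) * c * x ^ 2 * ((14 * x + 3 * y - 2 * NSG x y) / 15) :=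
          mul_le_mul_of_nonneg_right h1 hx'pos.le
  have h3 : (0:ℝ) < 8 * x ^ 2 := by positivity
  nlinarith [h2, sq_nonneg x]

lemma my_inv_le {C d : ℝ} (hd : 0 < d) (h : d⁻¹ ≤ C) : C⁻¹ ≤ d := by
  have hC : 0 < C := lt_of_lt_of_le (inv_pos.2 hd) h
  have h1 : (1:ℝ) ≤ d * C := by
    have := mul_le_mul_of_nonneg_left h hd.le
    rwa [mul_inv_cancel₀ hd.ne'] at this
  rw [show C⁻¹ = 1/C from (one_div C).symm, div_le_iff₀ hC]
  linarith


set_option maxHeartbeats 1000000 in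
theorem stmt10 (X Y : ℕ → ℝ) (h : FollowsSG X Y) (h0 : Y 0 < X 0) :
    ∃ C : ℝ, 0 < C ∧ ∀ n,
      C⁻¹ * (2 / 3 : ℝ) ^ n ≤ X n ∧ X n ≤ C * (2 / 3 : ℝ) ^ n ∧
      C⁻¹ * (1 / 2 : ℝ) ^ n ≤ Y n ∧ Y n ≤ C * (1 / 2 : ℝ) ^ n := by
  obtain ⟨hpos, hrec⟩ := h
  have hX : ∀ n, 0 < X n := fun n => (hpos n).1
  have hY : ∀ n, 0 < Y n := fun n => (hpos n).2
  set r0 := Y 0 / X 0 with hr0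
  have hr00 : 0 < r0 := div_pos (hY 0) (hX 0)
  have hr01 : r0 < 1 := (div_lt_one (hX 0)).2 h0
  have hY0X0 : Y 0 ≤ r0 * X 0 := le_of_eq (div_mul_cancel₀ _ (hX 0).ne').symm
  set ρ := (7 + r0) / 8 with hρdef
  have hρ0 : 0 < ρ := by rw [hρdef]; linarith
  have hρ1 : ρ < 1 := by rw [hρdef]; linarith
  set T : ℕ → ℝ := fun n => r0 * ∑ i ∈ Finset.range n, ρ ^ i with hT
  have hTzero : T 0 = 0 := by simp [hT]
  have hTsucc : ∀ n, T (n + 1) = T n + r0 * ρ ^ n := by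
    intro n; simp only [hT, Finset.sum_range_succ]; ring
  set S := r0 / (1 - ρ) with hS
  have h1ρ : 0 < 1 - ρ := by linarith
  have hTS : ∀ n, T n ≤ S := by
    intro n
    have hg := geom_sum_mul ρ n
    have hρn : (0:ℝ) ≤ ρ ^ n := pow_nonneg hρ0.le n
    have hSig : ∑ i ∈ Finset.range n, ρ ^ i ≤ 1 / (1 - ρ) := by
      rw [le_div_iff₀ h1ρ]
      nlinarith [hg]
    have := mul_le_mul_of_nonneg_left hSig hr00.le
    rw [hT, hS]
    calc r0 * ∑ i ∈ Finset.range n, ρ ^ i ≤ r0 * (1 / (1 - ρ)) := this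
      _ = r0 / (1 - ρ) := by ring
  have hS0 : 0 ≤ S := by rw [hS]; positivity
  clear_value S T ρ r0
  -- main induction
  have main : ∀ n, Y n < X n ∧ Y n ≤ r0 * ρ ^ n * X n ∧
      X n ≤ X 0 * (2/3 : ℝ) ^ n ∧
      X 0 * Real.exp (-(2/5 * T n)) * (2/3 : ℝ) ^ n ≤ X n ∧
      Y 0 * (1/2 : ℝ) ^ n ≤ Y n ∧
      Y n ≤ Y 0 * Real.exp (2/5 * T n) * (1/2 : ℝ) ^ n := by
    intro n
    induction n with
    | zero =>
      simp only [pow_zero, mul_one, hTzero, mul_zero, neg_zero, Real.exp_zero]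
      exact ⟨h0, hY0X0, le_refl _, le_refl _, le_refl _, le_refl _⟩
    | succ n ih =>
      obtain ⟨iha, ihb, ihc, ihd, ihe, ihf⟩ := ih
      obtain ⟨e1, e2⟩ := hrec n
      have hx := hX n; have hy := hY n
      have hc0 : 0 ≤ r0 * ρ ^ n := mul_nonneg hr00.le (pow_nonneg hρ0.le n)
      have hcr : r0 * ρ ^ n ≤ r0 := by
        have h1 : ρ ^ n ≤ 1 := pow_le_one₀ hρ0.le hρ1.le
        nlinarith
      have hc1 : r0 * ρ ^ n ≤ 1 := le_trans hcr hr01.le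
      have ha : Y (n + 1) < X (n + 1) := by rw [e1, e2]; exact step_lt hx hy iha
      have hb : Y (n + 1) ≤ r0 * ρ ^ (n + 1) * X (n + 1) := by
        have h1 : Y (n + 1) ≤ (7 + r0 * ρ ^ n) / 8 * (r0 * ρ ^ n) * X (n + 1) := by
          rw [e1, e2]; exact step_ratio hx hy iha ihb hc0
        have h2 : (7 + r0 * ρ ^ n) / 8 ≤ ρ := by linarith [hcr]
        calc Y (n + 1) ≤ (7 + r0 * ρ ^ n) / 8 * (r0 * ρ ^ n) * X (n + 1) := h1
          _ ≤ ρ * (r0 * ρ ^ n) * X (n + 1) := by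
              apply mul_le_mul_of_nonneg_right _ (hX (n + 1)).le
              exact mul_le_mul_of_nonneg_right h2 hc0
          _ = r0 * ρ ^ (n + 1) * X (n + 1) := by rw [pow_succ]; ring
      have hcX : X (n + 1) ≤ X 0 * (2/3 : ℝ) ^ (n + 1) := by
        rw [e1]
        calc (14 * X n + 3 * Y n - 2 * NSG (X n) (Y n)) / 15 ≤ 2/3 * X n := step_xub hx hy
          _ ≤ 2/3 * (X 0 * (2/3) ^ n) := by linarith
          _ = X 0 * (2/3) ^ (n + 1) := by rw [pow_succ]; ring
      have hexp1 : Real.exp (-(2/5 * (r0 * ρ ^ n))) ≤ 1 - (r0 * ρ ^ n) ^ 2 / 5 := by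
        have e0 : Real.exp (-(2 * ((r0 * ρ ^ n) ^ 2 / 5))) ≤ 1 - (r0 * ρ ^ n) ^ 2 / 5 :=
          exp_low (by positivity) (by nlinarith)
        refine le_trans (Real.exp_le_exp.2 ?_) e0
        nlinarith
      have hd : X 0 * Real.exp (-(2/5 * T (n + 1))) * (2/3 : ℝ) ^ (n + 1) ≤ X (n + 1) := by
        have h1 : 2/3 * ((1 - (r0 * ρ ^ n) ^ 2 / 5) * X n) ≤ X (n + 1) := by
          rw [e1]; exact step_xlb hx hy ihb hc0
        have h2 : X 0 * Real.exp (-(2/5 * T n)) * (2/3 : ℝ) ^ n * Real.exp (-(2/5 * (r0 * ρ ^ n)))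
            ≤ X n * (1 - (r0 * ρ ^ n) ^ 2 / 5) :=
          mul_le_mul ihd hexp1 (Real.exp_pos _).le hx.le
        have e3 : Real.exp (-(2/5 * T (n + 1))) =
            Real.exp (-(2/5 * T n)) * Real.exp (-(2/5 * (r0 * ρ ^ n))) := by
          rw [← Real.exp_add]; congr 1; rw [hTsucc n]; ring
        calc X 0 * Real.exp (-(2/5 * T (n + 1))) * (2/3 : ℝ) ^ (n + 1)
            = (X 0 * Real.exp (-(2/5 * T n)) * (2/3 : ℝ) ^ n *
                Real.exp (-(2/5 * (r0 * ρ ^ n)))) * (2/3) := by rw [e3, pow_succ]; ring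
          _ ≤ (X n * (1 - (r0 * ρ ^ n) ^ 2 / 5)) * (2/3) :=
              mul_le_mul_of_nonneg_right h2 (by norm_num)
          _ ≤ X (n + 1) := by linarith
      have he : Y 0 * (1/2 : ℝ) ^ (n + 1) ≤ Y (n + 1) := by
        have h1 : Y n / 2 ≤ Y (n + 1) := by rw [e2]; exact step_ypos hx hy
        calc Y 0 * (1/2 : ℝ) ^ (n + 1) = (Y 0 * (1/2) ^ n) / 2 := by rw [pow_succ]; ring
          _ ≤ Y n / 2 := by linarith
          _ ≤ Y (n + 1) := h1
      have hexp2 : 1 + 2/5 * (r0 * ρ ^ n) ≤ Real.exp (2/5 * (r0 * ρ ^ n)) := by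
        have := Real.add_one_le_exp (2/5 * (r0 * ρ ^ n)); linarith
      have hf : Y (n + 1) ≤ Y 0 * Real.exp (2/5 * T (n + 1)) * (1/2 : ℝ) ^ (n + 1) := by
        have h1 : Y (n + 1) ≤ (1 + 2/5 * (r0 * ρ ^ n)) * (Y n / 2) := by
          rw [e2]; exact step_yub hx hy ihb
        have e3 : Real.exp (2/5 * T (n + 1)) =
            Real.exp (2/5 * T n) * Real.exp (2/5 * (r0 * ρ ^ n)) := by
          rw [← Real.exp_add]; congr 1; rw [hTsucc n]; ring
        have h2 : (1 + 2/5 * (r0 * ρ ^ n)) * (Y n / 2) ≤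
            Real.exp (2/5 * (r0 * ρ ^ n)) * (Y 0 * Real.exp (2/5 * T n) * (1/2 : ℝ) ^ n / 2) :=
          mul_le_mul hexp2 (by linarith) (by linarith) (Real.exp_pos _).le
        calc Y (n + 1) ≤ (1 + 2/5 * (r0 * ρ ^ n)) * (Y n / 2) := h1
          _ ≤ Real.exp (2/5 * (r0 * ρ ^ n)) * (Y 0 * Real.exp (2/5 * T n) * (1/2 : ℝ) ^ n / 2) := h2
          _ = Y 0 * Real.exp (2/5 * T (n + 1)) * (1/2 : ℝ) ^ (n + 1) := by
              rw [e3, pow_succ]; ring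
      exact ⟨ha, hb, hcX, hd, he, hf⟩
  -- assemble the constant
  set B := X 0 + (X 0)⁻¹ + Y 0 + (Y 0)⁻¹ with hB
  have hBpos : 0 < B := by rw [hB]; have := inv_pos.2 (hX 0); have := inv_pos.2 (hY 0); linarith [hX 0, hY 0]
  have hexpS : 1 ≤ Real.exp (2/5 * S) := Real.one_le_exp (by linarith)
  refine ⟨B * Real.exp (2/5 * S), mul_pos hBpos (Real.exp_pos _), fun n => ?_⟩
  obtain ⟨_, _, hcup, hdlow, helow, hfup⟩ := main n
  have hpow23 : (0:ℝ) ≤ (2/3 : ℝ) ^ n := by positivity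
  have hpow12 : (0:ℝ) ≤ (1/2 : ℝ) ^ n := by positivity
  have hXinv : (X 0)⁻¹ ≤ B := by
    rw [hB]; have := inv_pos.2 (hY 0); have := hX 0; have := hY 0; linarith
  have hYinv : (Y 0)⁻¹ ≤ B := by
    rw [hB]; have := inv_pos.2 (hX 0); have := hX 0; have := hY 0; linarith
  refine ⟨?_, ?_, ?_, ?_⟩
  · -- lower bound for X
    have hd0 : 0 < X 0 * Real.exp (-(2/5 * S)) := mul_pos (hX 0) (Real.exp_pos _)
    have k1 : (B * Real.exp (2/5 * S))⁻¹ ≤ X 0 * Real.exp (-(2/5 * S)) := by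
      apply my_inv_le hd0
      rw [mul_inv, ← Real.exp_neg, neg_neg]
      exact mul_le_mul_of_nonneg_right hXinv (Real.exp_pos _).le
    calc (B * Real.exp (2/5 * S))⁻¹ * (2/3 : ℝ) ^ n
        ≤ X 0 * Real.exp (-(2/5 * S)) * (2/3 : ℝ) ^ n :=
          mul_le_mul_of_nonneg_right k1 hpow23
      _ ≤ X 0 * Real.exp (-(2/5 * T n)) * (2/3 : ℝ) ^ n := by
          apply mul_le_mul_of_nonneg_right _ hpow23
          apply mul_le_mul_of_nonneg_left _ (hX 0).le
          exact Real.exp_le_exp.2 (by linarith [hTS n])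
      _ ≤ X n := hdlow
  · -- upper bound for X
    have k2 : X 0 ≤ B * Real.exp (2/5 * S) := by
      calc X 0 ≤ B := by rw [hB]; have := inv_pos.2 (hX 0); have := inv_pos.2 (hY 0);
                         have := hY 0; linarith
        _ = B * 1 := (mul_one B).symm
        _ ≤ B * Real.exp (2/5 * S) := mul_le_mul_of_nonneg_left hexpS hBpos.le
    calc X n ≤ X 0 * (2/3 : ℝ) ^ n := hcup
      _ ≤ B * Real.exp (2/5 * S) * (2/3 : ℝ) ^ n := mul_le_mul_of_nonneg_right k2 hpow23
  · -- lower bound for Y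
    have k3 : (B * Real.exp (2/5 * S))⁻¹ ≤ Y 0 := by
      apply my_inv_le (hY 0)
      calc (Y 0)⁻¹ ≤ B := hYinv
        _ = B * 1 := (mul_one B).symm
        _ ≤ B * Real.exp (2/5 * S) := mul_le_mul_of_nonneg_left hexpS hBpos.le
    calc (B * Real.exp (2/5 * S))⁻¹ * (1/2 : ℝ) ^ n
        ≤ Y 0 * (1/2 : ℝ) ^ n := mul_le_mul_of_nonneg_right k3 hpow12
      _ ≤ Y n := helow
  · -- upper bound for Y
    have k4 : Y 0 * Real.exp (2/5 * T n) ≤ B * Real.exp (2/5 * S) := by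
      apply mul_le_mul _ (Real.exp_le_exp.2 (by linarith [hTS n])) (Real.exp_pos _).le hBpos.le
      rw [hB]; have := inv_pos.2 (hX 0); have := inv_pos.2 (hY 0); have := hX 0; linarith
    calc Y n ≤ Y 0 * Real.exp (2/5 * T n) * (1/2 : ℝ) ^ n := hfup
      _ ≤ B * Real.exp (2/5 * S) * (1/2 : ℝ) ^ n := mul_le_mul_of_nonneg_right k4 hpow12
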